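/- Suppose a nonnegative function N defined on the closed upper half-plane {z ∈ ℂ : Im z ≥ 0} is continuous, satisfies N(z) ≤ C(1+|z|²)e^{A Im z} everywhere for constants A, C > 0, satisfies N(iτ) ≤ C(1+τ²)e^{-Bτ} on the positive imaginary axis for some B > 0, and log N is subharmonic. Then there exist constants C', b > 0 (depending on A, B, C) such that N(z) ≤ C'(1+|z|²) e^{-b Im z} for all z in the sector {z : Im z ≥ |Re z|}. -/

import Mathlib

/-!
Multiply `F` by the holomorphic weight `e^{cz} / (z + i)` with `c = ∓B/8 - iB/4`. On the imaginary
axis the decay `e^{-Bτ}` dominates the weight, and on the ray of angle `ε` (resp. `π - ε`), where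
`tan ε = B / (4A + 2B)`, the weight exactly cancels the growth `e^{A Im z}`. So the weighted
function is bounded on both edges of the sector between that ray and the axis, hence inside it by
Phragmén–Lindelöf (pulled back by `exp` to a horizontal strip). The two sectors cover
`{Im z ≥ |Re z|}`, where removing the weight leaves the decay `e^{-(B/4) Im z}`.
-/

open Complex Set Filter
open scoped Real

namespace Complex

lemma one_add_sq_norm_le_sq_norm_add_I {z : ℂ} (hz : 0 ≤ z.im) : 1 + ‖z‖ ^ 2 ≤ ‖z + I‖ ^ 2 := by
  simp only [Complex.sq_norm, normSq_apply, add_re, add_im, I_re, I_im]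
  nlinarith

lemma sq_norm_add_I_le (z : ℂ) : ‖z + I‖ ^ 2 ≤ 2 * (1 + ‖z‖ ^ 2) := by
  simp only [Complex.sq_norm, normSq_apply, add_re, add_im, I_re, I_im]
  nlinarith [sq_nonneg (z.im - 1)]

lemma norm_add_I_pos {z : ℂ} (hz : 0 ≤ z.im) : 0 < ‖z + I‖ := by
  have := one_add_sq_norm_le_sq_norm_add_I hz
  by_contra! h
  nlinarith [norm_nonneg (z + I), sq_nonneg ‖z‖]

lemma arg_exp_of_mem_Ioc {w : ℂ} (h₁ : -π < w.im) (h₂ : w.im ≤ π) : arg (exp w) = w.im := by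
  rw [← log_im, log_exp h₁ h₂]

lemma im_pos_of_arg_mem_Ioo {z : ℂ} (h : arg z ∈ Ioo 0 π) : 0 < z.im := by
  have hz : z ≠ 0 := by rintro rfl; simp at h
  rw [← norm_mul_sin_arg]
  exact mul_pos (norm_pos_iff.2 hz) (Real.sin_pos_of_pos_of_lt_pi h.1 h.2)

lemma pi_div_two_le_arg_of_re_nonpos {z : ℂ} (hz : z ≠ 0) (hre : z.re ≤ 0) (him : 0 ≤ z.im) :
    π / 2 ≤ arg z := by
  rw [arg_of_im_nonneg_of_ne_zero him hz, ← Real.arccos_zero]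
  exact Real.arccos_le_arccos (div_nonpos_of_nonpos_of_nonneg hre (norm_nonneg z))

lemma arg_mem_Icc_of_abs_re_le_im {z : ℂ} (hz : z ≠ 0) (h : |z.re| ≤ z.im) :
    arg z ∈ Icc (π / 4) (3 * π / 4) := by
  have hcos : Real.arccos (√2 / 2) = π / 4 :=
    Real.arccos_eq_of_eq_cos (by positivity) (by linarith [Real.pi_pos]) Real.cos_pi_div_four.symm
  have hu : |z.re / ‖z‖| ≤ √2 / 2 := by
    have hz' : 0 < ‖z‖ ^ 2 := by positivity
    refine abs_le_of_sq_le_sq ?_ (by positivity)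
    rw [div_pow, div_pow, Real.sq_sqrt zero_le_two, div_le_iff₀ hz']
    nlinarith [Complex.sq_norm_sub_sq_re z, sq_abs z.re,
      mul_nonneg (abs_nonneg z.re) (sub_nonneg.2 h)]
  rw [arg_of_im_nonneg_of_ne_zero ((abs_nonneg _).trans h) hz]
  constructor
  · rw [← hcos]; exact Real.arccos_le_arccos (le_abs_self _ |>.trans hu)
  · have := Real.arccos_le_arccos (neg_le_of_abs_le hu)
    rw [Real.arccos_neg, hcos] at this
    linarith

end Complex

lemma Real.exists_mem_Ioo_mul_sin_eq_mul_cos {a b : ℝ} (hb : 0 < b) (hba : b < a) :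
    ∃ ε ∈ Ioo 0 (π / 4), a * Real.sin ε = b * Real.cos ε := by
  have ha : 0 < a := hb.trans hba
  refine ⟨Real.arctan (b / a), ⟨Real.arctan_pos.2 (div_pos hb ha), ?_⟩, ?_⟩
  · rw [← Real.arctan_one, Real.arctan_lt_arctan_iff, div_lt_one ha]
    exact hba
  · rw [Real.sin_arctan, Real.cos_arctan]
    field_simp

namespace PhragmenLindelof

variable {E : Type*} [NormedAddCommGroup E] [NormedSpace ℂ E]

theorem sector {g : ℂ → E} {θ₁ θ₂ M M' K : ℝ} (hθ₁ : -π < θ₁) (hθ₂ : θ₂ ≤ π) (hlt : θ₁ < θ₂)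
    (hopen : θ₂ - θ₁ < π) (hd : DiffContOnCl ℂ g (arg ⁻¹' Ioo θ₁ θ₂))
    (hgrow : ∀ z, arg z ∈ Ioo θ₁ θ₂ → ‖g z‖ ≤ M' * Real.exp (K * ‖z‖))
    (hray : ∀ z, arg z = θ₁ ∨ arg z = θ₂ → ‖g z‖ ≤ M)
    {z : ℂ} (hz : z ≠ 0) (harg : arg z ∈ Icc θ₁ θ₂) : ‖g z‖ ≤ M := by
  have harg_exp : ∀ w : ℂ, w.im ∈ Icc θ₁ θ₂ → arg (exp w) = w.im := fun w hw =>
    arg_exp_of_mem_Ioc (hθ₁.trans_le hw.1) (hw.2.trans hθ₂)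
  have hmaps : MapsTo exp (im ⁻¹' Ioo θ₁ θ₂) (arg ⁻¹' Ioo θ₁ θ₂) := fun w hw => by
    rwa [mem_preimage, harg_exp w (Ioo_subset_Icc_self hw)]
  have key : ‖g (exp (log z))‖ ≤ M := by
    refine horizontal_strip (f := g ∘ exp) (hd.comp differentiable_exp.diffContOnCl hmaps) ?_
      (fun w hw => hray _ (.inl ?_)) (fun w hw => hray _ (.inr ?_)) ?_ ?_
    · refine ⟨1, (one_lt_div (sub_pos.2 hlt)).2 (by linarith), |K|, ?_⟩
      refine .of_bound |M'| (eventually_inf_principal.2 (.of_forall fun w hw => ?_))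
      have hK : K * ‖exp w‖ ≤ |K| * Real.exp (1 * |w.re|) := by
        rw [norm_exp, one_mul]
        exact mul_le_mul (le_abs_self K) (Real.exp_le_exp.2 (le_abs_self _)) (by positivity)
          (abs_nonneg K)
      rw [Real.norm_of_nonneg (Real.exp_pos _).le]
      calc ‖(g ∘ exp) w‖ ≤ M' * Real.exp (K * ‖exp w‖) := hgrow _ (hmaps hw)
        _ ≤ |M'| * Real.exp (|K| * Real.exp (1 * |w.re|)) :=
          mul_le_mul (le_abs_self M') (Real.exp_le_exp.2 hK) (by positivity) (abs_nonneg M')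
    · rw [harg_exp w (by simp [hw, hlt.le]), hw]
    · rw [harg_exp w (by simp [hw, hlt.le]), hw]
    · rw [log_im]; exact harg.1
    · rw [log_im]; exact harg.2
  rwa [exp_log hz] at key

end PhragmenLindelof

section UpperHalfPlane

variable {E : Type*} [NormedAddCommGroup E] {F : ℂ → E} {A B C : ℝ}

theorem sq_norm_le_of_arg_mem_Icc [NormedSpace ℂ E] {c : ℂ} {K θ₁ θ₂ : ℝ} (hC : 0 ≤ C)
    (hθ₁ : 0 ≤ θ₁) (hθ₂ : θ₂ ≤ π) (hlt : θ₁ < θ₂) (hopen : θ₂ - θ₁ < π)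
    (hd : DifferentiableOn ℂ F {z | 0 < z.im}) (hc : ContinuousOn F {z | 0 ≤ z.im})
    (hgrow : ∀ z : ℂ, 0 ≤ z.im → ‖F z‖ ^ 2 ≤ C * (1 + ‖z‖ ^ 2) * Real.exp (K * ‖z‖))
    (hray : ∀ z : ℂ, arg z = θ₁ ∨ arg z = θ₂ →
      ‖F z‖ ^ 2 ≤ C * (1 + ‖z‖ ^ 2) * Real.exp (-2 * (c * z).re))
    {z : ℂ} (hz : z ≠ 0) (harg : arg z ∈ Icc θ₁ θ₂) :
    ‖F z‖ ^ 2 ≤ 2 * C * (1 + ‖z‖ ^ 2) * Real.exp (-2 * (c * z).re) := by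
  set G : ℂ → E := fun w => (exp (c * w) / (w + I)) • F w
  have hG : ∀ w : ℂ, 0 ≤ w.im → ‖G w‖ * ‖w + I‖ = Real.exp (c * w).re * ‖F w‖ := fun w hw => by
    simp only [G, norm_smul, norm_div, norm_exp]
    field_simp [(norm_add_I_pos hw).ne']
  have hGsq : ∀ w : ℂ, ∀ L : ℝ, 0 ≤ w.im → ‖F w‖ ^ 2 ≤ C * (1 + ‖w‖ ^ 2) * Real.exp L →
      ‖G w‖ ^ 2 ≤ C * Real.exp (L + 2 * (c * w).re) := fun w L hw hF => by
    have hpos := pow_pos (norm_add_I_pos hw) 2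
    refine le_of_mul_le_mul_right ?_ hpos
    calc ‖G w‖ ^ 2 * ‖w + I‖ ^ 2 = Real.exp (c * w).re ^ 2 * ‖F w‖ ^ 2 := by
          rw [← mul_pow, hG w hw, mul_pow]
      _ ≤ Real.exp (c * w).re ^ 2 * (C * ‖w + I‖ ^ 2 * Real.exp L) := by
          gcongr
          exact hF.trans (by gcongr; exact one_add_sq_norm_le_sq_norm_add_I hw)
      _ = C * Real.exp (L + 2 * (c * w).re) * ‖w + I‖ ^ 2 := by
          rw [← Real.exp_nat_mul, Real.exp_add]; push_cast; ring
  have hS : arg ⁻¹' Ioo θ₁ θ₂ ⊆ {w | 0 < w.im} := fun w hw =>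
    im_pos_of_arg_mem_Ioo ⟨hθ₁.trans_lt hw.1, hw.2.trans_le hθ₂⟩
  have hGd : DiffContOnCl ℂ G {w | 0 < w.im} := by
    refine .smul (DifferentiableOn.diffContOnCl ?_) ⟨hd, by rwa [closure_setOfPred_lt_im]⟩
    rw [closure_setOfPred_lt_im]
    exact ((differentiable_exp.comp (differentiable_id.const_mul c)).differentiableOn).div
      (differentiable_id.add_const I).differentiableOn fun w hw =>
        norm_pos_iff.1 (norm_add_I_pos hw)
  have hGgrow : ∀ w : ℂ, arg w ∈ Ioo θ₁ θ₂ →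
      ‖G w‖ ≤ √C * Real.exp ((K / 2 + ‖c‖) * ‖w‖) := fun w hw => by
    have him : 0 ≤ w.im := (hS hw).le
    refine le_of_pow_le_pow_left₀ two_ne_zero (by positivity)
      ((hGsq w _ him (hgrow w him)).trans ?_)
    have : (c * w).re ≤ ‖c‖ * ‖w‖ := (re_le_norm _).trans (norm_mul c w).le
    rw [mul_pow, Real.sq_sqrt hC, ← Real.exp_nat_mul]
    gcongr
    push_cast
    linarith
  have hGray : ∀ w : ℂ, arg w = θ₁ ∨ arg w = θ₂ → ‖G w‖ ≤ √C := fun w hw => by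
    have him : 0 ≤ w.im := arg_nonneg_iff.1 (by rcases hw with hw | hw <;> linarith)
    refine Real.le_sqrt_of_sq_le ((hGsq w _ him (hray w hw)).trans_eq ?_)
    simp
  have hGz : ‖G z‖ ^ 2 ≤ C :=
    (Real.le_sqrt (norm_nonneg _) hC).1 <| PhragmenLindelof.sector (by linarith [Real.pi_pos])
      hθ₂ hlt hopen (hGd.mono hS) hGgrow hGray hz harg
  have him : 0 ≤ z.im := arg_nonneg_iff.1 (hθ₁.trans harg.1)
  calc ‖F z‖ ^ 2 = (‖G z‖ * ‖z + I‖) ^ 2 * Real.exp (-2 * (c * z).re) := by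
        rw [hG z him, mul_pow, ← Real.exp_nat_mul, mul_right_comm, ← Real.exp_add]
        simp
    _ ≤ C * (2 * (1 + ‖z‖ ^ 2)) * Real.exp (-2 * (c * z).re) := by
        rw [mul_pow]; gcongr; exact sq_norm_add_I_le z
    _ = 2 * C * (1 + ‖z‖ ^ 2) * Real.exp (-2 * (c * z).re) := by ring

lemma sq_norm_le_of_arg_eq (hC : 0 ≤ C)
    (hgrow : ∀ z : ℂ, 0 ≤ z.im → ‖F z‖ ^ 2 ≤ C * (1 + ‖z‖ ^ 2) * Real.exp (A * z.im))
    {p θ : ℝ} (hθ₀ : 0 ≤ θ) (hθ : (2 * A + B) * Real.sin θ + 4 * p * Real.cos θ ≤ 0)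
    {z : ℂ} (hz : arg z = θ) :
    ‖F z‖ ^ 2 ≤ C * (1 + ‖z‖ ^ 2) * Real.exp (-(2 * p * z.re + B / 2 * z.im)) := by
  refine (hgrow z (arg_nonneg_iff.1 (hz ▸ hθ₀))).trans <|
    mul_le_mul_of_nonneg_left (Real.exp_le_exp.2 ?_) (by positivity)
  rw [← norm_mul_cos_arg, ← norm_mul_sin_arg, hz]
  nlinarith [mul_nonneg (norm_nonneg z) (neg_nonneg.2 hθ)]

lemma sq_norm_le_of_arg_eq_pi_div_two (hB : 0 ≤ B) (hC : 0 ≤ C)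
    (haxis : ∀ τ : ℝ, 0 ≤ τ → ‖F ((τ : ℂ) * I)‖ ^ 2 ≤ C * (1 + τ ^ 2) * Real.exp (-B * τ))
    (p : ℝ) {z : ℂ} (hz : arg z = π / 2) :
    ‖F z‖ ^ 2 ≤ C * (1 + ‖z‖ ^ 2) * Real.exp (-(2 * p * z.re + B / 2 * z.im)) := by
  obtain ⟨hre, him⟩ := arg_eq_pi_div_two_iff.1 hz
  have hz' : z = (z.im : ℂ) * I := Complex.ext (by simp [hre]) (by simp)
  have hnorm : ‖z‖ = z.im := by simpa [hz] using norm_mul_sin_arg z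
  have haxis_z := haxis z.im him.le
  rw [← hz'] at haxis_z
  calc ‖F z‖ ^ 2 ≤ C * (1 + z.im ^ 2) * Real.exp (-B * z.im) := haxis_z
    _ ≤ C * (1 + ‖z‖ ^ 2) * Real.exp (-(2 * p * z.re + B / 2 * z.im)) := by
      rw [hnorm, hre]
      gcongr
      nlinarith

theorem sq_norm_le_of_arg_mem_uIcc [NormedSpace ℂ E] (hA : 0 ≤ A) (hB : 0 < B) (hC : 0 ≤ C)
    (hol : DifferentiableOn ℂ F {z : ℂ | 0 < z.im}) (hcont : ContinuousOn F {z : ℂ | 0 ≤ z.im})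
    (hgrow : ∀ z : ℂ, 0 ≤ z.im → ‖F z‖ ^ 2 ≤ C * (1 + ‖z‖ ^ 2) * Real.exp (A * z.im))
    (haxis : ∀ τ : ℝ, 0 ≤ τ → ‖F ((τ : ℂ) * I)‖ ^ 2 ≤ C * (1 + τ ^ 2) * Real.exp (-B * τ))
    {p θ : ℝ} (hθ₀ : 0 < θ) (hθπ : θ < π)
    (hθ : (2 * A + B) * Real.sin θ + 4 * p * Real.cos θ ≤ 0)
    {z : ℂ} (hz : z ≠ 0) (harg : arg z ∈ uIcc θ (π / 2)) :
    ‖F z‖ ^ 2 ≤ 2 * C * (1 + ‖z‖ ^ 2) * Real.exp (-(2 * p * z.re + B / 2 * z.im)) := by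
  have hθne : θ ≠ π / 2 := by
    rintro rfl
    simp only [Real.sin_pi_div_two, Real.cos_pi_div_two] at hθ
    linarith
  have hgrow_norm : ∀ w : ℂ, 0 ≤ w.im → ‖F w‖ ^ 2 ≤ C * (1 + ‖w‖ ^ 2) * Real.exp (A * ‖w‖) :=
    fun w hw => (hgrow w hw).trans (by gcongr; exact im_le_norm w)
  have hweight : ∀ w : ℂ, -2 * ((p - B / 4 * I) * w).re = -(2 * p * w.re + B / 2 * w.im) :=
    fun w => by simp; ring
  have hray : ∀ w : ℂ, arg w = θ ∨ arg w = π / 2 →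
      ‖F w‖ ^ 2 ≤ C * (1 + ‖w‖ ^ 2) * Real.exp (-2 * ((p - B / 4 * I) * w).re) := by
    rintro w (hw | hw)
    · exact hweight w ▸ sq_norm_le_of_arg_eq hC hgrow hθ₀.le hθ hw
    · exact hweight w ▸ sq_norm_le_of_arg_eq_pi_div_two hB.le hC haxis p hw
  rw [← hweight]
  rcases hθne.lt_or_gt with h | h
  · exact sq_norm_le_of_arg_mem_Icc hC hθ₀.le (by linarith) h (by linarith) hol hcont hgrow_norm
      hray hz (uIcc_of_le h.le ▸ harg)
  · exact sq_norm_le_of_arg_mem_Icc hC (by linarith [Real.pi_pos]) hθπ.le h (by linarith) hol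
      hcont hgrow_norm (fun w hw => hray w hw.symm) hz (uIcc_of_ge h.le ▸ harg)

end UpperHalfPlane

-- `log N` subharmonic is modelled by `N = ‖F‖²` with `F` holomorphic.
theorem stmt13 {E : Type*} [NormedAddCommGroup E] [NormedSpace ℂ E]
    (F : ℂ → E) (A B C : ℝ) (hA : 0 < A) (hB : 0 < B) (hC : 0 < C)
    (hol : DifferentiableOn ℂ F {z : ℂ | 0 < z.im})
    (hcont : ContinuousOn F {z : ℂ | 0 ≤ z.im})
    (hgrow : ∀ z : ℂ, 0 ≤ z.im → ‖F z‖ ^ 2 ≤ C * (1 + ‖z‖ ^ 2) * Real.exp (A * z.im))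
    (haxis : ∀ τ : ℝ, 0 ≤ τ → ‖F ((τ : ℂ) * Complex.I)‖ ^ 2 ≤ C * (1 + τ ^ 2) * Real.exp (-B * τ)) :
    ∃ C' : ℝ, 0 < C' ∧ ∃ b : ℝ, 0 < b ∧ ∀ z : ℂ, |z.re| ≤ z.im →
      ‖F z‖ ^ 2 ≤ C' * (1 + ‖z‖ ^ 2) * Real.exp (-b * z.im) := by
  obtain ⟨ε, ⟨hε₀, hε⟩, hsin⟩ :=
    Real.exists_mem_Ioo_mul_sin_eq_mul_cos (a := 2 * A + B) (b := B / 2) (by positivity)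
      (by linarith)
  refine ⟨2 * C, by positivity, B / 4, by positivity, fun z hz => ?_⟩
  rcases eq_or_ne z 0 with rfl | hz₀
  · have h0 := hgrow 0 le_rfl
    norm_num at h0 ⊢
    linarith
  obtain ⟨hπ4, h3π4⟩ := arg_mem_Icc_of_abs_re_le_im hz₀ hz
  obtain ⟨hre_ge, hre_le⟩ := abs_le.1 hz
  have hπ := Real.pi_pos
  rcases le_total 0 z.re with hre | hre
  · refine (sq_norm_le_of_arg_mem_uIcc hA.le hB hC.le hol hcont hgrow haxis (p := -(B / 8))
      hε₀ (by linarith) (by linarith) hz₀ ?_).trans ?_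
    · exact mem_uIcc.2 (.inl ⟨by linarith, arg_le_pi_div_two_iff.2 (.inl hre)⟩)
    · refine mul_le_mul_of_nonneg_left (Real.exp_le_exp.2 ?_) (by positivity)
      nlinarith
  · refine (sq_norm_le_of_arg_mem_uIcc hA.le hB hC.le hol hcont hgrow haxis (p := B / 8)
      (θ := π - ε) (by linarith) (by linarith) ?_ hz₀ ?_).trans ?_
    · rw [Real.sin_pi_sub, Real.cos_pi_sub]; linarith
    · exact mem_uIcc.2 (.inr ⟨pi_div_two_le_arg_of_re_nonpos hz₀ hre (by linarith), by linarith⟩)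
    · refine mul_le_mul_of_nonneg_left (Real.exp_le_exp.2 ?_) (by positivity)
      nlinarith
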